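/- The all-ones matrix 1_N 1_N^T is the identity element of the Abelian group (𝒞^N, ⊙), where 𝒞^N = {A + B : A L-CoLT with nonzero lower triangular entries, B U-CoLT with nonzero strictly upper triangular entries}: for any M ∈ 𝒞^N, M ⊙ (1_N 1_N^T) = M, and the entrywise reciprocal of M (on its support) lies in 𝒞^N and is the inverse of M. -/

import Mathlib

open Matrix Finset

/-- `A` is an L-CoLT matrix with ratio vector `r` (0-indexed; `r` has `N-1` meaningful
nonzero entries): `A (i+1) j = r i * A i j` for `j ≤ i`, and `A i j = 0` for `i < j`. -/
def IsLCoLT {N : ℕ} (A : Matrix (Fin N) (Fin N) ℝ) (r : ℕ → ℝ) : Prop :=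
  (∀ k, k + 1 < N → r k ≠ 0) ∧
  (∀ i i' j : Fin N, (i' : ℕ) = (i : ℕ) + 1 → (j : ℕ) ≤ (i : ℕ) → A i' j = r i * A i j) ∧
  (∀ i j : Fin N, (i : ℕ) < (j : ℕ) → A i j = 0)

/-- `A` is a U-CoLT matrix with ratio vector `r'` (0-indexed; `r'` has `N-2` meaningful
nonzero entries): `A (i-1) j = r' (i-1) * A i j` for `i < j`, and `A i j = 0` for `j ≤ i`. -/
def IsUCoLT {N : ℕ} (A : Matrix (Fin N) (Fin N) ℝ) (r' : ℕ → ℝ) : Prop :=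
  (∀ k, k + 2 < N → r' k ≠ 0) ∧
  (∀ i i' j : Fin N, (i : ℕ) = (i' : ℕ) + 1 → (i : ℕ) < (j : ℕ) → A i' j = r' i' * A i j) ∧
  (∀ i j : Fin N, (j : ℕ) ≤ (i : ℕ) → A i j = 0)

/-- The set 𝒞^N with nonzero entries on the supports of the two summands:
sums of an L-CoLT matrix with nonzero lower triangular entries and a U-CoLT matrix
with nonzero strictly upper triangular entries. -/
def InCNnz {N : ℕ} (M : Matrix (Fin N) (Fin N) ℝ) : Prop :=
  ∃ A B : Matrix (Fin N) (Fin N) ℝ,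
    (∃ r, IsLCoLT A r) ∧ (∃ r', IsUCoLT B r') ∧ M = A + B ∧
    (∀ i j : Fin N, (j : ℕ) ≤ (i : ℕ) → A i j ≠ 0) ∧
    (∀ i j : Fin N, (i : ℕ) < (j : ℕ) → B i j ≠ 0)

/-! Inverting entrywise preserves the defining ratio relations of L- and U-CoLT matrices, with
the ratios inverted, and (as `0⁻¹ = 0`) keeps their zero patterns. Since the two summands of an
element of `𝒞^N` have complementary supports, the reciprocal of the sum is the sum of the
reciprocals, and all its entries are nonzero. -/

section

variable {N : ℕ}

theorem IsLCoLT.inv {A : Matrix (Fin N) (Fin N) ℝ} {r : ℕ → ℝ} (hA : IsLCoLT A r) :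
    IsLCoLT (fun i j => (A i j)⁻¹) (fun k => (r k)⁻¹) := by
  obtain ⟨hr, hrec, hzero⟩ := hA
  refine ⟨fun k hk => inv_ne_zero (hr k hk), fun i i' j hi hj => ?_, fun i j hij => ?_⟩
  · simp only [hrec i i' j hi hj, mul_inv]
  · simp only [hzero i j hij, _root_.inv_zero]

theorem IsUCoLT.inv {B : Matrix (Fin N) (Fin N) ℝ} {r' : ℕ → ℝ} (hB : IsUCoLT B r') :
    IsUCoLT (fun i j => (B i j)⁻¹) (fun k => (r' k)⁻¹) := by
  obtain ⟨hr, hrec, hzero⟩ := hB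
  refine ⟨fun k hk => inv_ne_zero (hr k hk), fun i i' j hi hj => ?_, fun i j hij => ?_⟩
  · simp only [hrec i i' j hi hj, mul_inv]
  · simp only [hzero i j hij, _root_.inv_zero]

theorem inv_add_of_eq_zero_or_eq_zero {K : Type*} [DivisionRing K] {a b : K}
    (h : a = 0 ∨ b = 0) : (a + b)⁻¹ = a⁻¹ + b⁻¹ := by
  rcases h with rfl | rfl <;> simp

theorem InCNnz.ne_zero {M : Matrix (Fin N) (Fin N) ℝ} (hM : InCNnz M) (i j : Fin N) :
    M i j ≠ 0 := by
  obtain ⟨A, B, ⟨r, hA⟩, ⟨r', hB⟩, rfl, hAnz, hBnz⟩ := hM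
  rcases le_or_gt (j : ℕ) i with hji | hij
  · simpa [hB.2.2 i j hji] using hAnz i j hji
  · simpa [hA.2.2 i j hij] using hBnz i j hij

theorem InCNnz.inv {M : Matrix (Fin N) (Fin N) ℝ} (hM : InCNnz M) :
    InCNnz (fun i j => (M i j)⁻¹) := by
  obtain ⟨A, B, ⟨r, hA⟩, ⟨r', hB⟩, rfl, hAnz, hBnz⟩ := hM
  refine ⟨fun i j => (A i j)⁻¹, fun i j => (B i j)⁻¹, ⟨_, hA.inv⟩, ⟨_, hB.inv⟩, ?_,
    fun i j hji => inv_ne_zero (hAnz i j hji), fun i j hij => inv_ne_zero (hBnz i j hij)⟩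
  ext i j
  refine inv_add_of_eq_zero_or_eq_zero ?_
  rcases le_or_gt (j : ℕ) i with hji | hij
  · exact Or.inr (hB.2.2 i j hji)
  · exact Or.inl (hA.2.2 i j hij)

theorem InCNnz.hadamard_inv {M : Matrix (Fin N) (Fin N) ℝ} (hM : InCNnz M) :
    M ⊙ (fun i j => (M i j)⁻¹) = of 1 := by
  ext i j
  exact mul_inv_cancel₀ (hM.ne_zero i j)

end

theorem stmt10 {N : ℕ} (M : Matrix (Fin N) (Fin N) ℝ) (hM : InCNnz M) :
    Matrix.hadamard M ((fun _ _ => 1) : Matrix (Fin N) (Fin N) ℝ) = M ∧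
    Matrix.hadamard ((fun _ _ => 1) : Matrix (Fin N) (Fin N) ℝ) M = M ∧
    InCNnz ((fun i j => (M i j)⁻¹) : Matrix (Fin N) (Fin N) ℝ) ∧
    Matrix.hadamard M ((fun i j => (M i j)⁻¹) : Matrix (Fin N) (Fin N) ℝ)
      = ((fun _ _ => 1) : Matrix (Fin N) (Fin N) ℝ) :=
  ⟨hadamard_of_one M, of_one_hadamard M, hM.inv, hM.hadamard_inv⟩
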